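/- Let 𝒜 = {α₁,…,α_m} be a trellis in ℕⁿ and let β be a lattice point in the relative interior of the convex hull of 𝒜. Then there exists an 𝒜-rational mediated set M containing β such that every coordinate of every point of M has odd denominator and every coordinate of every point of M \ {β} has even numerator. -/

import Mathlib

/-!
The barycentric coordinates `λ` of `β` with respect to the simplex `𝒜` are rational (they solve a
rational linear system with a unique real solution) and nonnegative. If the `λ_α` all have odd
denominators, `β` lies on a grid `{∑ (c_α / D) α : c ∈ ℕ^𝒜, ∑ c_α = D}` with `D` odd; since the
vertices are even, all grid points have even numerators and odd denominators, and every grid point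
that is not a vertex is the midpoint of two distinct grid points. Otherwise choose a grid point
`x` whose weights are at most `2λ`; then `β` is the midpoint of `x` and `y = 2β - x`, whose
weights `2λ - μ` need one factor `2` fewer in their denominators, and `y` has even numerators.
Induction on the power of `2` in the denominators finishes the proof.
-/

/-- A lattice point is even if all its coordinates are even. -/
def IsEvenPt {n : ℕ} (α : Fin n → ℕ) : Prop := ∀ i, Even (α i)

/-- Embedding of lattice points into `ℝⁿ`. -/
noncomputable def toR {n : ℕ} (α : Fin n → ℕ) : Fin n → ℝ := fun i => (α i : ℝ)

/-- Embedding of lattice points into `ℚⁿ`. -/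
def toQ {n : ℕ} (α : Fin n → ℕ) : Fin n → ℚ := fun i => (α i : ℚ)

/-- A trellis: a nonempty finite set of even lattice points that are affinely independent
(the vertices of a simplex). -/
def IsTrellis {n : ℕ} (A : Finset (Fin n → ℕ)) : Prop :=
  A.Nonempty ∧ (∀ α ∈ A, IsEvenPt α) ∧
    AffineIndependent ℝ (fun α : A => toR (α : Fin n → ℕ))

/-- For a finite affinely independent set `A ⊆ ℚⁿ`, a finite set `M ⊆ ℚⁿ` is an `A`-rational
mediated set if `A ⊆ M` and every point of `M \ A` is the average of two distinct points
of `M`. -/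
def IsRatMediatedSet {n : ℕ} (A M : Finset (Fin n → ℚ)) : Prop :=
  A ⊆ M ∧ ∀ u ∈ M, u ∉ A → ∃ v ∈ M, ∃ w ∈ M, v ≠ w ∧ u = (2⁻¹ : ℚ) • (v + w)

def oddDenSubring : Subring ℚ where
  carrier := {q | Odd q.den}
  mul_mem' {q r} hq hr := (hq.mul hr).of_dvd_nat (Rat.mul_den_dvd q r)
  one_mem' := by simp
  add_mem' {q r} hq hr := (hq.mul hr).of_dvd_nat (Rat.add_den_dvd q r)
  zero_mem' := by simp
  neg_mem' {q} hq := by simpa using hq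

theorem mem_oddDenSubring {q : ℚ} : q ∈ oddDenSubring ↔ Odd q.den := Iff.rfl

theorem inv_natCast_mem_oddDenSubring {d : ℕ} (hd : Odd d) : (d : ℚ)⁻¹ ∈ oddDenSubring := by
  rw [mem_oddDenSubring, Rat.inv_natCast_den_of_pos hd.pos]
  exact hd

theorem even_num_of_inv_two_mul_mem_oddDenSubring {q : ℚ} (h : 2⁻¹ * q ∈ oddDenSubring) :
    Even q.num := by
  set r := 2⁻¹ * q
  have hq : q = ((2 * r.num : ℤ) : ℚ) / (r.den : ℤ) := by
    push_cast
    rw [mul_div_assoc, Rat.num_div_den]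
    simp [r]
  have hcop : (2 * r.num).natAbs.Coprime (r.den : ℤ).natAbs := by
    rw [Int.natAbs_mul, Int.natAbs_natCast]
    exact Nat.Coprime.mul_left (Nat.coprime_two_left.mpr h) r.reduced
  rw [hq, Rat.num_div_eq_of_coprime (by exact_mod_cast r.den_pos) hcop]
  exact even_two_mul _

/-- `(2⁻¹ : ℚ) • u ∈ oddDenSubmodule ι` says that every coordinate of `u` has odd denominator and
even numerator. -/
def oddDenSubmodule (ι : Type*) : Submodule oddDenSubring (ι → ℚ) where
  carrier := {u | ∀ i, u i ∈ oddDenSubring}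
  add_mem' hu hv i := add_mem (hu i) (hv i)
  zero_mem' _ := zero_mem _
  smul_mem' r _ hu i := mul_mem r.2 (hu i)

theorem smul_mem_oddDenSubmodule {ι : Type*} {q : ℚ} (hq : q ∈ oddDenSubring) {u : ι → ℚ}
    (hu : u ∈ oddDenSubmodule ι) : q • u ∈ oddDenSubmodule ι :=
  Submodule.smul_mem _ ⟨q, hq⟩ hu

section Weights

variable {ι : Type*} [Fintype ι]

theorem exists_intCast_eq_mul_prod_den (l : ι → ℚ) (i : ι) :
    ∃ z : ℤ, l i * ∏ k, (l k).den = z := by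
  obtain ⟨t, ht⟩ := Finset.dvd_prod_of_mem (fun k => (l k).den) (Finset.mem_univ i)
  refine ⟨(l i).num * t, ?_⟩
  rw [ht, Nat.cast_mul, ← mul_assoc, Rat.mul_den_eq_num]
  push_cast; rfl

theorem exists_two_pow_mul_mem_oddDenSubring (l : ι → ℚ) :
    ∃ j : ℕ, ∀ i, 2 ^ j * l i ∈ oddDenSubring := by
  obtain ⟨j, m, hm, hd⟩ := Nat.exists_eq_two_pow_mul_odd
    (Finset.prod_ne_zero_iff.mpr fun k _ => (l k).den_ne_zero)
  refine ⟨j, fun i => ?_⟩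
  obtain ⟨z, hz⟩ := exists_intCast_eq_mul_prod_den l i
  have hm0 : (m : ℚ) ≠ 0 := by exact_mod_cast hm.pos.ne'
  have : 2 ^ j * l i = z * (m : ℚ)⁻¹ := by
    rw [← hz, hd]; push_cast; field_simp
  rw [this]
  exact mul_mem (intCast_mem _ z) (inv_natCast_mem_oddDenSubring hm)

variable [DecidableEq ι]

open Multiset in
theorem exists_multiset_count_eq (c : ι → ℕ) :
    ∃ s : Multiset ι, card s = ∑ i, c i ∧ ∀ i, s.count i = c i := by
  refine ⟨∑ i, replicate (c i) i, by simp [Multiset.card_sum], fun i => ?_⟩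
  simp [Multiset.count_sum', Multiset.count_replicate]

theorem exists_odd_multiset_of_mem_oddDenSubring {l : ι → ℚ} (hl : ∀ i, l i ∈ oddDenSubring)
    (hl0 : ∀ i, 0 ≤ l i) (hl1 : ∑ i, l i = 1) :
    ∃ s : Multiset ι, Odd (Multiset.card s) ∧ ∀ i, l i = s.count i / Multiset.card s := by
  set d := ∏ k, (l k).den
  have hd : Odd d := Finset.prod_induction _ Odd (fun _ _ => Odd.mul) odd_one fun k _ => hl k
  have hd0 : (d : ℚ) ≠ 0 := by exact_mod_cast hd.pos.ne'
  have hc : ∀ i, ((l i * d).num.toNat : ℚ) = l i * d := fun i => by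
    obtain ⟨z, hz⟩ := exists_intCast_eq_mul_prod_den l i
    have hz0 : 0 ≤ z := by exact_mod_cast hz ▸ mul_nonneg (hl0 i) (Nat.cast_nonneg d)
    rw [hz, Rat.num_intCast]; exact_mod_cast Int.toNat_of_nonneg hz0
  obtain ⟨s, hs, hsc⟩ := exists_multiset_count_eq fun i => (l i * d).num.toNat
  have hsd : Multiset.card s = d := by
    have : ((Multiset.card s : ℕ) : ℚ) = d := by
      rw [hs]; push_cast; simp_rw [hc, ← Finset.sum_mul, hl1, one_mul]
    exact_mod_cast this
  refine ⟨s, hsd ▸ hd, fun i => ?_⟩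
  rw [hsc, hc, hsd, mul_div_cancel_right₀ _ hd0]

theorem exists_multiset_card_eq_count_le (c : ι → ℕ) {D : ℕ} (hD : D ≤ ∑ i, c i) :
    ∃ s : Multiset ι, Multiset.card s = D ∧ ∀ i, s.count i ≤ c i := by
  obtain ⟨T, hT, hTc⟩ := exists_multiset_count_eq c
  have : (Multiset.powersetCard D T).card ≠ 0 := by
    rw [Multiset.card_powersetCard, hT]; exact (Nat.choose_pos hD).ne'
  obtain ⟨s, hs⟩ := Multiset.card_pos_iff_exists_mem.mp (Nat.pos_of_ne_zero this)
  rw [Multiset.mem_powersetCard] at hs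
  exact ⟨s, hs.2, fun i => hTc i ▸ Multiset.count_le_of_le i hs.1⟩

theorem exists_multiset_count_le_two_mul {l : ι → ℚ} (hl0 : ∀ i, 0 ≤ l i) (hl1 : ∑ i, l i = 1)
    {D : ℕ} (hD : Fintype.card ι ≤ D) :
    ∃ s : Multiset ι, Multiset.card s = D ∧ ∀ i, (s.count i : ℚ) ≤ 2 * D * l i := by
  have hsum : (D : ℚ) ≤ ∑ i, (⌊2 * D * l i⌋₊ : ℚ) := calc
    (D : ℚ) ≤ ∑ i, (2 * D * l i - 1) := by
      rw [Finset.sum_sub_distrib, ← Finset.mul_sum, hl1]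
      simp only [Finset.sum_const, Finset.card_univ, nsmul_eq_mul, mul_one]
      linarith [(Nat.cast_le (α := ℚ)).mpr hD]
    _ ≤ ∑ i, (⌊2 * D * l i⌋₊ : ℚ) := Finset.sum_le_sum fun i _ => (Nat.sub_one_lt_floor _).le
  obtain ⟨s, hs, hsc⟩ := exists_multiset_card_eq_count_le (fun i => ⌊2 * D * l i⌋₊)
    (by exact_mod_cast hsum)
  refine ⟨s, hs, fun i => (Nat.cast_le.mpr (hsc i)).trans (Nat.floor_le ?_)⟩
  have := hl0 i
  positivity

/-- The weights `μ` of a grid point with odd denominator `D` can be chosen below `2 l`; the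
remainder `ν = 2 l - μ` then needs one factor `2` fewer in its denominators. -/
theorem exists_two_mul_eq_count_div_add {j : ℕ} {l : ι → ℚ} (hl0 : ∀ i, 0 ≤ l i)
    (hl1 : ∑ i, l i = 1) (hlj : ∀ i, 2 ^ (j + 1) * l i ∈ oddDenSubring) :
    ∃ s : Multiset ι, Odd (Multiset.card s) ∧ ∃ ν : ι → ℚ, (∀ i, 0 ≤ ν i) ∧ ∑ i, ν i = 1 ∧
      (∀ i, 2 ^ j * ν i ∈ oddDenSubring) ∧ ∀ i, 2 * l i = s.count i / Multiset.card s + ν i := by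
  set D := 2 * Fintype.card ι + 1
  have hD : Odd D := odd_two_mul_add_one _
  have hD0 : (D : ℚ) ≠ 0 := by exact_mod_cast hD.pos.ne'
  obtain ⟨s, hs, hsl⟩ := exists_multiset_count_le_two_mul hl0 hl1 (by omega : _ ≤ D)
  refine ⟨s, hs ▸ hD, fun i => 2 * l i - s.count i / D, fun i => ?_, ?_, fun i => ?_,
    fun i => by rw [hs]; ring⟩
  · rw [sub_nonneg, div_le_iff₀ (by positivity)]
    linarith [hsl i]
  · have hcount : ∑ i, (s.count i : ℚ) = D := by
      rw [← hs]; exact_mod_cast Multiset.sum_count_eq_card fun i _ => Finset.mem_univ i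
    rw [Finset.sum_sub_distrib, ← Finset.mul_sum, ← Finset.sum_div, hl1, hcount, div_self hD0]
    norm_num
  · rw [show 2 ^ j * (2 * l i - s.count i / D) = 2 ^ (j + 1) * l i - 2 ^ j * s.count i * (D : ℚ)⁻¹
      by ring]
    exact sub_mem (hlj i) (mul_mem (mul_mem (pow_mem (natCast_mem _ 2) j) (natCast_mem _ _))
      (inv_natCast_mem_oddDenSubring hD))

end Weights

section Grid

variable {ι E : Type*} [AddCommGroup E] [Module ℚ E] (v : ι → E)

def gridPoints (D : ℕ) : Set E :=
  Set.range fun s : Sym ι D => (D : ℚ)⁻¹ • ((s : Multiset ι).map v).sum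

variable {v}

theorem mem_gridPoints {D : ℕ} {x : E} :
    x ∈ gridPoints v D ↔ ∃ s : Multiset ι, Multiset.card s = D ∧ (D : ℚ)⁻¹ • (s.map v).sum = x :=
  ⟨fun ⟨s, hs⟩ => ⟨s, s.2, hs⟩, fun ⟨s, hs, hx⟩ => ⟨⟨s, hs⟩, hx⟩⟩

theorem sum_count_div_smul_mem_gridPoints [Fintype ι] [DecidableEq ι] (v : ι → E)
    (s : Multiset ι) :
    ∑ i, ((s.count i : ℚ) / Multiset.card s) • v i ∈ gridPoints v (Multiset.card s) := by
  refine mem_gridPoints.mpr ⟨s, rfl, ?_⟩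
  rw [Finset.sum_multiset_map_count, Finset.smul_sum]
  refine Finset.sum_subset (Finset.subset_univ _) (fun i _ hi => ?_) |>.trans
    (Finset.sum_congr rfl fun i _ => ?_)
  · rw [Multiset.count_eq_zero.mpr (by simpa using hi)]; simp
  · rw [← Nat.cast_smul_eq_nsmul ℚ, smul_smul, div_eq_inv_mul]

theorem gridPoints_finite [Finite ι] (D : ℕ) : (gridPoints v D).Finite :=
  Set.finite_range _

theorem inv_natCast_smul_sum_map_replicate {D : ℕ} (hD : D ≠ 0) (i : ι) :
    (D : ℚ)⁻¹ • ((Multiset.replicate D i).map v).sum = v i := by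
  rw [Multiset.map_replicate, Multiset.sum_replicate, ← Nat.cast_smul_eq_nsmul ℚ, inv_smul_smul₀]
  exact_mod_cast hD

theorem range_subset_gridPoints {D : ℕ} (hD : D ≠ 0) : Set.range v ⊆ gridPoints v D := by
  rintro _ ⟨i, rfl⟩
  exact mem_gridPoints.mpr ⟨Multiset.replicate D i, Multiset.card_replicate D i,
    inv_natCast_smul_sum_map_replicate hD i⟩

/-- If `x` uses two distinct vertices `i ≠ j`, shifting one unit of weight from `j` to `i`, resp.
from `i` to `j`, gives two grid points with midpoint `x`. -/
theorem exists_midpoint_of_mem_gridPoints (hv : Function.Injective v) {D : ℕ} (hD : D ≠ 0)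
    {x : E} (hx : x ∈ gridPoints v D) (hxv : x ∉ Set.range v) :
    ∃ y ∈ gridPoints v D, ∃ z ∈ gridPoints v D, y ≠ z ∧ x = (2⁻¹ : ℚ) • (y + z) := by
  obtain ⟨s, hs, rfl⟩ := mem_gridPoints.mp hx
  by_cases hij : ∃ i ∈ s, ∃ j ∈ s, i ≠ j
  · obtain ⟨i, hi, j, hj, hij⟩ := hij
    obtain ⟨s', rfl⟩ := Multiset.exists_cons_of_mem hi
    obtain ⟨t, rfl⟩ := Multiset.exists_cons_of_mem
      ((Multiset.mem_cons.mp hj).resolve_left (Ne.symm hij))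
    have hcard : Multiset.card t + 2 = D := by simpa using hs
    refine ⟨(D : ℚ)⁻¹ • ((i ::ₘ i ::ₘ t).map v).sum,
      mem_gridPoints.mpr ⟨_, by simpa using hcard, rfl⟩,
      (D : ℚ)⁻¹ • ((j ::ₘ j ::ₘ t).map v).sum,
      mem_gridPoints.mpr ⟨_, by simpa using hcard, rfl⟩, ?_, ?_⟩
    · intro h
      have hD' : (D : ℚ)⁻¹ ≠ 0 := inv_ne_zero (by exact_mod_cast hD)
      simp only [Multiset.map_cons, Multiset.sum_cons, smul_right_inj hD'] at h
      have h2 : (2 : ℚ) • (v i - v j) = 0 := by linear_combination (norm := module) h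
      exact hij (hv (sub_eq_zero.mp ((smul_eq_zero.mp h2).resolve_left two_ne_zero)))
    · simp only [Multiset.map_cons, Multiset.sum_cons]
      module
  · push Not at hij
    obtain ⟨i, hi⟩ := Multiset.card_pos_iff_exists_mem.mp (hs ▸ Nat.pos_of_ne_zero hD)
    obtain rfl := Multiset.eq_replicate.mpr ⟨hs, fun j hj => hij j hj i hi⟩
    exact (hxv ⟨i, (inv_natCast_smul_sum_map_replicate hD i).symm⟩).elim

end Grid

theorem mem_oddDenSubmodule_of_inv_two_smul_mem {κ : Type*} {u : κ → ℚ}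
    (hu : (2⁻¹ : ℚ) • u ∈ oddDenSubmodule κ) : u ∈ oddDenSubmodule κ := by
  simpa using smul_mem_oddDenSubmodule (natCast_mem _ 2) hu

theorem inv_two_smul_mem_of_mem_gridPoints {ι κ : Type*} {v : ι → κ → ℚ}
    (hv : ∀ i, (2⁻¹ : ℚ) • v i ∈ oddDenSubmodule κ) {D : ℕ} (hD : Odd D) {x : κ → ℚ}
    (hx : x ∈ gridPoints v D) : (2⁻¹ : ℚ) • x ∈ oddDenSubmodule κ := by
  obtain ⟨s, -, rfl⟩ := mem_gridPoints.mp hx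
  rw [smul_comm, Multiset.smul_sum, Multiset.map_map]
  refine smul_mem_oddDenSubmodule (inv_natCast_mem_oddDenSubring hD)
    (multiset_sum_mem _ fun u hu => ?_)
  obtain ⟨i, -, rfl⟩ := Multiset.mem_map.mp hu
  exact hv i

structure IsParityMediatedSet {κ : Type*} (V : Set (κ → ℚ)) (p : κ → ℚ) (M : Set (κ → ℚ)) :
    Prop where
  finite : M.Finite
  subset : V ⊆ M
  mem : p ∈ M
  subset_oddDenSubmodule : M ⊆ oddDenSubmodule κ
  inv_two_smul_mem : ∀ u ∈ M, u ≠ p → (2⁻¹ : ℚ) • u ∈ oddDenSubmodule κ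
  exists_midpoint : ∀ u ∈ M, u ∉ V → ∃ y ∈ M, ∃ z ∈ M, y ≠ z ∧ u = (2⁻¹ : ℚ) • (y + z)

namespace IsParityMediatedSet

variable {κ : Type*} {V M M' : Set (κ → ℚ)} {p p' : κ → ℚ}

theorem inv_two_smul_mem_of_mem (h : IsParityMediatedSet V p M)
    (hp : (2⁻¹ : ℚ) • p ∈ oddDenSubmodule κ) {u : κ → ℚ} (hu : u ∈ M) :
    (2⁻¹ : ℚ) • u ∈ oddDenSubmodule κ := by
  by_cases hup : u = p
  · exact hup ▸ hp
  · exact h.inv_two_smul_mem u hu hup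

theorem insert_midpoint (h : IsParityMediatedSet V p M) (h' : IsParityMediatedSet V p' M')
    (hp : (2⁻¹ : ℚ) • p ∈ oddDenSubmodule κ) (hp' : (2⁻¹ : ℚ) • p' ∈ oddDenSubmodule κ)
    (hne : p ≠ p') (hmid : (2⁻¹ : ℚ) • (p + p') ∈ oddDenSubmodule κ) :
    IsParityMediatedSet V ((2⁻¹ : ℚ) • (p + p')) (insert ((2⁻¹ : ℚ) • (p + p')) (M ∪ M')) where
  finite := (h.finite.union h'.finite).insert _
  subset := h.subset.trans (Set.subset_union_left.trans (Set.subset_insert _ _))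
  mem := Set.mem_insert _ _
  subset_oddDenSubmodule := Set.insert_subset hmid
    (Set.union_subset h.subset_oddDenSubmodule h'.subset_oddDenSubmodule)
  inv_two_smul_mem u hu hne := by
    rcases (Set.mem_insert_iff.mp hu).resolve_left hne with hu | hu
    · exact h.inv_two_smul_mem_of_mem hp hu
    · exact h'.inv_two_smul_mem_of_mem hp' hu
  exists_midpoint u hu huV := by
    have hsub : M ∪ M' ⊆ insert ((2⁻¹ : ℚ) • (p + p')) (M ∪ M') := Set.subset_insert _ _
    rcases hu with rfl | hu | hu
    · exact ⟨p, hsub (.inl h.mem), p', hsub (.inr h'.mem), hne, rfl⟩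
    · obtain ⟨y, hy, z, hz, hyz, rfl⟩ := h.exists_midpoint u hu huV
      exact ⟨y, hsub (.inl hy), z, hsub (.inl hz), hyz, rfl⟩
    · obtain ⟨y, hy, z, hz, hyz, rfl⟩ := h'.exists_midpoint u hu huV
      exact ⟨y, hsub (.inr hy), z, hsub (.inr hz), hyz, rfl⟩

end IsParityMediatedSet

section Descent

variable {ι κ : Type*} {v : ι → κ → ℚ}

theorem isParityMediatedSet_gridPoints [Finite ι] (hv : Function.Injective v)
    (hv2 : ∀ i, (2⁻¹ : ℚ) • v i ∈ oddDenSubmodule κ) {D : ℕ} (hD : Odd D) {x : κ → ℚ}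
    (hx : x ∈ gridPoints v D) : IsParityMediatedSet (Set.range v) x (gridPoints v D) where
  finite := gridPoints_finite D
  subset := range_subset_gridPoints hD.pos.ne'
  mem := hx
  subset_oddDenSubmodule _ hu :=
    mem_oddDenSubmodule_of_inv_two_smul_mem (inv_two_smul_mem_of_mem_gridPoints hv2 hD hu)
  inv_two_smul_mem _ hu _ := inv_two_smul_mem_of_mem_gridPoints hv2 hD hu
  exists_midpoint _ hu huV := exists_midpoint_of_mem_gridPoints hv hD.pos.ne' hu huV

theorem exists_isParityMediatedSet [Fintype ι] [DecidableEq ι] (hv : Function.Injective v)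
    (hv2 : ∀ i, (2⁻¹ : ℚ) • v i ∈ oddDenSubmodule κ) (j : ℕ) {l : ι → ℚ} (hl0 : ∀ i, 0 ≤ l i)
    (hl1 : ∑ i, l i = 1) (hlj : ∀ i, 2 ^ j * l i ∈ oddDenSubring)
    (hp : ∑ i, l i • v i ∈ oddDenSubmodule κ) :
    ∃ M, IsParityMediatedSet (Set.range v) (∑ i, l i • v i) M := by
  induction j generalizing l with
  | zero =>
    obtain ⟨s, hs, hl⟩ := exists_odd_multiset_of_mem_oddDenSubring (by simpa using hlj) hl0 hl1
    have hx := sum_count_div_smul_mem_gridPoints v s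
    simp only [← hl] at hx
    exact ⟨_, isParityMediatedSet_gridPoints hv hv2 hs hx⟩
  | succ j ih =>
    obtain ⟨s, hs, ν, hν0, hν1, hνj, hlν⟩ := exists_two_mul_eq_count_div_add hl0 hl1 hlj
    set x := ∑ i, ((s.count i : ℚ) / Multiset.card s) • v i
    have hx := sum_count_div_smul_mem_gridPoints v s
    have hx2 := inv_two_smul_mem_of_mem_gridPoints hv2 hs hx
    set y := ∑ i, ν i • v i
    have hpxy : ∑ i, l i • v i = (2⁻¹ : ℚ) • (x + y) := by
      simp only [x, y, ← Finset.sum_add_distrib, ← add_smul, ← hlν, Finset.smul_sum, smul_smul]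
      simp
    have hy2 : (2⁻¹ : ℚ) • y ∈ oddDenSubmodule κ := by
      have : (2⁻¹ : ℚ) • y = ∑ i, l i • v i - (2⁻¹ : ℚ) • x := by rw [hpxy]; module
      exact this ▸ sub_mem hp hx2
    have hG := isParityMediatedSet_gridPoints hv hv2 hs hx
    by_cases hxy : x = y
    · rw [hpxy, ← hxy, ← two_smul ℚ x, inv_smul_smul₀ two_ne_zero]
      exact ⟨_, hG⟩
    · obtain ⟨M, hM⟩ := ih hν0 hν1 hνj (mem_oddDenSubmodule_of_inv_two_smul_mem hy2)
      rw [hpxy] at hp ⊢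
      exact ⟨_, hG.insert_midpoint hM hx2 hy2 hxy hp⟩

end Descent

def homogenize {k κ : Type*} [One k] (u : κ → k) : Option κ → k := fun o => o.elim 1 u

theorem AffineIndependent.linearIndependent_homogenize {k ι κ : Type*} [Ring k] {p : ι → κ → k}
    (hp : AffineIndependent k p) : LinearIndependent k fun i => homogenize (p i) := by
  rw [linearIndependent_iff']
  intro s g hg i hi
  have hg1 : ∑ i ∈ s, g i = 0 := by simpa [homogenize] using congrFun hg none
  refine hp s g hg1 ?_ i hi
  rw [Finset.weightedVSub_eq_linear_combination _ hg1]
  funext j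
  simpa [homogenize] using congrFun hg (some j)

theorem LinearIndependent.mem_span_of_algebraMap_comp_mem_span {K L ι κ : Type*} [Field K]
    [Field L] [Algebra K L] [Finite κ] {v : ι → κ → K} (hv : LinearIndependent K v) {b : κ → K}
    (hb : algebraMap K L ∘ b ∈ Submodule.span L (Set.range fun i => algebraMap K L ∘ v i)) :
    b ∈ Submodule.span K (Set.range v) := by
  by_contra h
  have := (linearIndependent_algebraMap_comp_iff (S := L)).mpr (hv.option h)
  exact (linearIndependent_option.mp this).2 hb

theorem exists_rat_weights_of_mem_convexHull {ι κ : Type*} [Fintype ι] [Finite κ]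
    {v : ι → κ → ℚ} (hv : AffineIndependent ℝ fun i => algebraMap ℚ ℝ ∘ v i) {b : κ → ℚ}
    (hb : algebraMap ℚ ℝ ∘ b ∈ convexHull ℝ (Set.range fun i => algebraMap ℚ ℝ ∘ v i)) :
    ∃ l : ι → ℚ, (∀ i, 0 ≤ l i) ∧ ∑ i, l i = 1 ∧ ∑ i, l i • v i = b := by
  rw [convexHull_range_eq_exists_affineCombination] at hb
  obtain ⟨s, w, hw0, hw1, hwb⟩ := hb
  have hcomm (u : κ → ℚ) : algebraMap ℚ ℝ ∘ homogenize u = homogenize (algebraMap ℚ ℝ ∘ u) := by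
    funext o; cases o <;> simp [homogenize]
  have hvQ : LinearIndependent ℚ fun i => homogenize (v i) :=
    (linearIndependent_algebraMap_comp_iff (S := ℝ)).mp (by simpa only [hcomm] using
      hv.linearIndependent_homogenize)
  have hspan : homogenize b ∈ Submodule.span ℚ (Set.range fun i => homogenize (v i)) := by
    refine hvQ.mem_span_of_algebraMap_comp_mem_span (L := ℝ) ?_
    have hhom : homogenize (∑ i ∈ s, w i • (algebraMap ℚ ℝ ∘ v i)) =
        ∑ i ∈ s, w i • homogenize (algebraMap ℚ ℝ ∘ v i) := by
      funext o; cases o <;> simp [homogenize, Finset.sum_apply, hw1]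
    simp only [hcomm, ← hwb, Finset.affineCombination_eq_linear_combination _ _ _ hw1, hhom]
    exact Submodule.sum_mem _ fun i _ => Submodule.smul_mem _ _ (Submodule.subset_span ⟨i, rfl⟩)
  obtain ⟨l, hl⟩ := (Submodule.mem_span_range_iff_exists_fun ℚ).mp hspan
  have hl1 : ∑ i, l i = 1 := by simpa [homogenize] using congrFun hl none
  have hlb : ∑ i, l i • v i = b := funext fun j => by simpa [homogenize] using congrFun hl (some j)
  refine ⟨l, fun i => ?_, hl1, hlb⟩
  -- by affine independence, `l` agrees with the nonnegative real weights `w`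
  have hl1' : ∑ i, (l i : ℝ) = 1 := by exact_mod_cast hl1
  have hlb' : algebraMap ℚ ℝ ∘ b =
      Finset.univ.affineCombination ℝ (fun i => algebraMap ℚ ℝ ∘ v i) fun i => (l i : ℝ) := by
    rw [Finset.affineCombination_eq_linear_combination _ _ _ hl1', ← hlb]
    funext j; simp [Finset.sum_apply]
  have hwl := congrFun (hv.indicator_eq_of_affineCombination_eq s Finset.univ w _ hw1 hl1'
    (hwb.trans hlb')) i
  rw [Finset.coe_univ, Set.indicator_univ] at hwl
  exact_mod_cast hwl ▸ Set.indicator_nonneg hw0 i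

/-- Let `𝒜` be a trellis in `ℕⁿ` and let `β` be a lattice point in the
relative interior of the convex hull of `𝒜`. Then there exists an `𝒜`-rational mediated set
`M` containing `β` such that every coordinate of every point of `M` has odd denominator and
every coordinate of every point of `M \ {β}` has even numerator. -/
theorem exists_ratMediatedSet_of_trellis_parity {n : ℕ} (A : Finset (Fin n → ℕ))
    (hA : IsTrellis A) (β : Fin n → ℕ)
    (hβ : toR β ∈ intrinsicInterior ℝ (convexHull ℝ (toR '' (A : Set (Fin n → ℕ))))) :
    ∃ M : Finset (Fin n → ℚ), IsRatMediatedSet (A.image toQ) M ∧ toQ β ∈ M ∧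
      (∀ u ∈ M, ∀ i, Odd (u i).den) ∧
      (∀ u ∈ M, u ≠ toQ β → ∀ i, Even (u i).num) := by
  classical
  obtain ⟨-, hAev, hAI⟩ := hA
  have hcast (α : Fin n → ℕ) : algebraMap ℚ ℝ ∘ toQ α = toR α := by
    funext i; simp [toQ, toR]
  set v : A → Fin n → ℚ := fun α => toQ α
  have hv : Function.Injective v := fun a b h =>
    Subtype.ext (funext fun i => by simpa [v, toQ] using congrFun h i)
  have hv2 (α : A) : (2⁻¹ : ℚ) • v α ∈ oddDenSubmodule (Fin n) := fun i => by
    obtain ⟨m, hm⟩ := hAev α α.2 i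
    simp [v, toQ, hm, ← two_mul]
  have hhull : algebraMap ℚ ℝ ∘ toQ β ∈ convexHull ℝ (Set.range fun α => algebraMap ℚ ℝ ∘ v α) := by
    simpa [v, hcast, Set.image_eq_range] using intrinsicInterior_subset hβ
  obtain ⟨l, hl0, hl1, hlβ⟩ :=
    exists_rat_weights_of_mem_convexHull (by simpa [v, hcast] using hAI) hhull
  obtain ⟨j, hj⟩ := exists_two_pow_mul_mem_oddDenSubring l
  obtain ⟨M, hM⟩ := exists_isParityMediatedSet hv hv2 j hl0 hl1 hj
    (hlβ ▸ fun i => natCast_mem _ (β i))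
  rw [hlβ] at hM
  have hrange : Set.range v = ↑(A.image toQ) := by ext; simp [v]
  rw [hrange] at hM
  refine ⟨hM.finite.toFinset, ⟨fun u hu => ?_, fun u hu huA => ?_⟩, by simpa using hM.mem,
    fun u hu => hM.subset_oddDenSubmodule (by simpa using hu),
    fun u hu hne i => even_num_of_inv_two_mul_mem_oddDenSubring
      (hM.inv_two_smul_mem u (by simpa using hu) hne i)⟩
  · simpa using hM.subset hu
  · simpa using hM.exists_midpoint u (by simpa using hu) huA
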